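/- Let R be a non-collapsing TRS over a signature Σ (no rule of R has a variable as its right-hand side) and let A = (A,[[·]]) be a core partial model for R. Then R is terminating on L(A) = {t ground : [[t]] defined} if and only if the labelled TRS lab_A(R) over the labelled signature Σ_lab is terminating on all terms over Σ_lab. -/

import Mathlib

/-!
A labelled term may be labelled wrongly: the label at an argument position need not be the value
of the argument. Since the model is core, every value `a` has a ground representative `rep a`.
Dropping the labels of `s` and replacing each wrongly labelled argument by the representative of
its label gives a defined ground term `repair s`; the maximal wrongly labelled subterms are
collected, recursively, into a tree `treeOf s` with root `repair s`. As `A` is a model with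
equality and `R` is non-collapsing, a labelled step never changes the value announced at the root
of the term it rewrites. So a step either happens in the correctly labelled top region, where
`repair s` takes an `R`-step and no new wrongly labelled subterms appear, or below a wrong label,
where it decreases one subtree. Trees thus decrease in an order (`Tree.Lt`) that is well-founded
as soon as `R` terminates on defined ground terms. Conversely, `R`-steps preserve values, so an
infinite `R`-reduction of a defined ground term labels to an infinite `lab_A(R)`-reduction.
-/

namespace LocalTerm

/-- Terms over a signature `F` with arities `ar` and variables `X`. -/
inductive Tm (F : Type) (ar : F → ℕ) (X : Type) : Type
  | var : X → Tm F ar X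
  | app : (f : F) → (Fin (ar f) → Tm F ar X) → Tm F ar X

/-- Substitution. -/
def subst {F : Type} {ar : F → ℕ} {X Y : Type} (σ : X → Tm F ar Y) :
    Tm F ar X → Tm F ar Y
  | .var x => σ x
  | .app f ts => .app f fun i => subst σ (ts i)

/-- One-step rewrite relation of a set `R` of rules (over variables `X`),
acting on terms over variables `V`: a rule instance inside a one-hole context. -/
inductive Rw {F : Type} {ar : F → ℕ} {X V : Type}
    (R : Set (Tm F ar X × Tm F ar X)) : Tm F ar V → Tm F ar V → Prop
  | rule {l r : Tm F ar X} (h : (l, r) ∈ R) (σ : X → Tm F ar V) :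
      Rw R (subst σ l) (subst σ r)
  | ctxt {f : F} {ts : Fin (ar f) → Tm F ar V} (i : Fin (ar f)) {t' : Tm F ar V} :
      Rw R (ts i) t' → Rw R (Tm.app f ts) (Tm.app f (Function.update ts i t'))

/-- The set of variables of a term. -/
def Vars {F : Type} {ar : F → ℕ} {X : Type} : Tm F ar X → Set X
  | .var x => {x}
  | .app _ ts => ⋃ i, Vars (ts i)

/-- `R` is a TRS: no left-hand side is a variable,
and all variables of a right-hand side occur in the left-hand side. -/
def IsTRS {F : Type} {ar : F → ℕ} {X : Type}
    (R : Set (Tm F ar X × Tm F ar X)) : Prop :=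
  ∀ p ∈ R, (∀ x : X, p.1 ≠ Tm.var x) ∧ Vars p.2 ⊆ Vars p.1

/-- A partial interpretation of the function symbols in a set `A`:
for every `n`-ary symbol a partial function `Aⁿ ⇀ A`. -/
abbrev Interp (F : Type) (ar : F → ℕ) (A : Type) : Type :=
  ∀ f : F, (Fin (ar f) → A) → Option A

/-- `Eval I α t a` : the (partial) interpretation of `t` under assignment `α`
is defined and equal to `a`. -/
inductive Eval {F : Type} {ar : F → ℕ} {X A : Type}
    (I : Interp F ar A) (α : X → A) : Tm F ar X → A → Prop
  | var (x : X) : Eval I α (Tm.var x) (α x)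
  | app {f : F} {ts : Fin (ar f) → Tm F ar X} (as : Fin (ar f) → A) {a : A}
      (hts : ∀ i, Eval I α (ts i) (as i)) (hI : I f as = some a) :
      Eval I α (Tm.app f ts) a

/-- A set `T` of ground terms is defined if the interpretation of
every `t ∈ T` is defined. -/
def DefinedOn {F : Type} {ar : F → ℕ} {A : Type}
    (I : Interp F ar A) (T : Set (Tm F ar Empty)) : Prop :=
  ∀ t ∈ T, ∃ a : A, Eval I Empty.elim t a

/-- `succ` is a partial model for `R`: whenever the interpretation of a
left-hand side is defined, the right-hand side is defined as well and the
interpretations are related by `succ`. -/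
def PartialModel {F : Type} {ar : F → ℕ} {X A : Type}
    (I : Interp F ar A) (succ : A → A → Prop)
    (R : Set (Tm F ar X × Tm F ar X)) : Prop :=
  ∀ p ∈ R, ∀ (α : X → A) (a : A), Eval I α p.1 a →
    ∃ b : A, Eval I α p.2 b ∧ succ a b

/-- A partial function is closed w.r.t. a relation. -/
def ClosedFn {A : Type} {n : ℕ} (g : (Fin n → A) → Option A)
    (r : A → A → Prop) : Prop :=
  ∀ (v : Fin n → A) (i : Fin n) (b : A), r (v i) b → (g v).isSome →
    (g (Function.update v i b)).isSome

/-- A partial function is monotone w.r.t. a relation. -/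
def MonoFn {A : Type} {n : ℕ} (g : (Fin n → A) → Option A)
    (r : A → A → Prop) : Prop :=
  ∀ (v : Fin n → A) (i : Fin n) (b : A) (x y : A), r (v i) b →
    g v = some x → g (Function.update v i b) = some y → r x y

/-- `(A, I, r)` is a monotone partial algebra: every interpretation is
closed and monotone with respect to `r`. -/
def MonoAlg {F : Type} {ar : F → ℕ} {A : Type}
    (I : Interp F ar A) (r : A → A → Prop) : Prop :=
  ∀ f : F, ClosedFn (I f) r ∧ MonoFn (I f) r

/-- Well-foundedness: no infinite descending sequence. -/
def WFrel {A : Type} (r : A → A → Prop) : Prop :=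
  ¬ ∃ f : ℕ → A, ∀ n : ℕ, r (f n) (f (n + 1))

/-- `r` is terminating on `T`: no element of `T` starts an infinite `r`-sequence. -/
def SNon {B : Type} (r : B → B → Prop) (T : Set B) : Prop :=
  ∀ t ∈ T, ¬ ∃ f : ℕ → B, f 0 = t ∧ ∀ n : ℕ, r (f n) (f (n + 1))

/-- Relative termination on `T`: no element of `T` starts an infinite
`(r ∪ s)`-sequence containing infinitely many `r`-steps. -/
def SNrelOn {B : Type} (r s : B → B → Prop) (T : Set B) : Prop :=
  ∀ t ∈ T, ¬ ∃ f : ℕ → B, f 0 = t ∧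
    (∀ n : ℕ, r (f n) (f (n + 1)) ∨ s (f n) (f (n + 1))) ∧
    (∀ m : ℕ, ∃ n : ℕ, m ≤ n ∧ r (f n) (f (n + 1)))

/-- Relative termination (on everything). -/
def SNrel {B : Type} (r s : B → B → Prop) : Prop := SNrelOn r s Set.univ

/-- The labelled signature: symbols `f` together with a tuple of labels `λ`
such that `I f λ` is defined. -/
def FlabT {F : Type} {ar : F → ℕ} {A : Type} (I : Interp F ar A) : Type :=
  {p : Σ f : F, Fin (ar f) → A // (I p.1 p.2).isSome}

/-- Arity of labelled symbols. -/
def arLab {F : Type} {ar : F → ℕ} {A : Type} (I : Interp F ar A) :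
    FlabT I → ℕ :=
  fun p => ar p.1.1

/-- `Lab I α t t'` : `t'` is the labelling of `t` with respect to the
assignment `α` (defined whenever the interpretation of `t` is defined): each
symbol gets labelled by the tuple of the values of its arguments. -/
inductive Lab {F : Type} {ar : F → ℕ} {X A : Type}
    (I : Interp F ar A) (α : X → A) :
    Tm F ar X → Tm (FlabT I) (arLab I) X → Prop
  | var (x : X) : Lab I α (Tm.var x) (Tm.var x)
  | app {f : F} {ts : Fin (ar f) → Tm F ar X} (as : Fin (ar f) → A)
      (h : (I f as).isSome) (ts' : Fin (ar f) → Tm (FlabT I) (arLab I) X)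
      (hev : ∀ i, Eval I α (ts i) (as i))
      (hlab : ∀ i, Lab I α (ts i) (ts' i)) :
      Lab I α (Tm.app f ts) (Tm.app ⟨⟨f, as⟩, h⟩ ts')

/-- The labelled TRS `lab_A(R)`: all labellings of rules of `R` under
assignments for which the left-hand side is defined. -/
def labTRS {F : Type} {ar : F → ℕ} {X A : Type}
    (I : Interp F ar A) (R : Set (Tm F ar X × Tm F ar X)) :
    Set (Tm (FlabT I) (arLab I) X × Tm (FlabT I) (arLab I) X) :=
  {q | ∃ p ∈ R, ∃ α : X → A, (∃ a : A, Eval I α p.1 a) ∧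
        Lab I α p.1 q.1 ∧ Lab I α p.2 q.2}

/-- The core of a partial algebra: the smallest subset closed under all
defined applications of the interpretations. -/
inductive InCore {F : Type} {ar : F → ℕ} {A : Type}
    (I : Interp F ar A) : A → Prop
  | mk {f : F} (as : Fin (ar f) → A) {a : A} :
      (∀ i, InCore I (as i)) → I f as = some a → InCore I a

section Termination

variable {B : Type} {r : B → B → Prop}

theorem snOn_iff_forall_acc {T : Set B} : SNon r T ↔ ∀ t ∈ T, Acc (flip r) t :=
  forall₂_congr fun _ _ => not_iff_comm.1 not_acc_iff_exists_descending_chain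

def revOn (r : B → B → Prop) (T : Set B) (b a : B) : Prop := a ∈ T ∧ r a b

theorem SNon.wellFounded {T : Set B} (h : SNon r T) : WellFounded (revOn r T) :=
  ⟨fun a => by
    by_cases ha : a ∈ T
    · exact Subrelation.accessible (fun h => h.2) (snOn_iff_forall_acc.1 h a ha)
    · exact ⟨a, fun _ h => absurd h.1 ha⟩⟩

theorem SNon.of_wellFounded (h : WellFounded (flip r)) (T : Set B) : SNon r T :=
  snOn_iff_forall_acc.2 fun t _ => h.apply t

theorem _root_.Acc.not_rel_self {a : B} (h : Acc r a) : ¬ r a a := by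
  induction h with
  | intro a _ ih => exact fun haa => ih a haa haa

end Termination

inductive Tree (B : Type) : Type
  | node : B → List (Tree B) → Tree B

namespace Tree

variable {B : Type} (prec : B → B → Prop)

inductive Lt : Tree B → Tree B → Prop
  | root {g' g : B} {L' L : List (Tree B)} : prec g' g → L' ⊆ L → Lt (node g' L') (node g L)
  | child {g : B} {L' L : List (Tree B)} {x' x : Tree B} (M : Multiset (Tree B)) :
      Lt x' x → (L : Multiset (Tree B)) = x ::ₘ M → (L' : Multiset (Tree B)) = x' ::ₘ M →
      Lt (node g L') (node g L)

variable {prec}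

theorem lt_node_iff {g' g : B} {L' L : List (Tree B)} :
    Lt prec (node g' L') (node g L) ↔ (prec g' g ∧ L' ⊆ L) ∨
      (g' = g ∧ ∃ M x' x, Lt prec x' x ∧
        (L : Multiset (Tree B)) = x ::ₘ M ∧ (L' : Multiset (Tree B)) = x' ::ₘ M) := by
  constructor
  · rintro (⟨hp, hs⟩ | ⟨M, hlt, hL, hL'⟩)
    · exact .inl ⟨hp, hs⟩
    · exact .inr ⟨rfl, M, _, _, hlt, hL, hL'⟩
  · rintro (⟨hp, hs⟩ | ⟨rfl, M, x', x, hlt, hL, hL'⟩)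
    · exact .root hp hs
    · exact .child M hlt hL hL'

open Relation in
theorem acc_node {g : B} (hg : Acc prec g) {L : List (Tree B)}
    (hL : ∀ x ∈ L, Acc (Lt prec) x) : Acc (Lt prec) (node g L) := by
  induction hg generalizing L with
  | intro g _ ihg =>
  -- Restricted to accessible trees, `Lt` is irreflexive, as `Relation.acc_of_singleton` needs.
  let r : Tree B → Tree B → Prop := fun x' x => Lt prec x' x ∧ Acc (Lt prec) x
  have : Std.Irrefl r := ⟨fun x hx => hx.2.not_rel_self hx.1⟩
  have hM : Acc (CutExpand r) (L : Multiset (Tree B)) := acc_of_singleton fun x hx =>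
    (Subrelation.accessible (fun h => h.1) (hL x hx)).cutExpand
  generalize hML : (L : Multiset (Tree B)) = M at hM
  induction hM generalizing L with
  | intro M _ ihM =>
  subst hML
  refine ⟨_, fun y hy => ?_⟩
  cases hy with
  | root hp hsub => exact ihg _ hp fun x hx => hL x (hsub hx)
  | @child _ L' _ x' x N hlt hL₁ hL'₁ =>
    have hx : Acc (Lt prec) x := hL x (by simp [← Multiset.mem_coe, hL₁])
    refine ihM _ ?_ (fun y hy => ?_) rfl
    · rw [hL₁, hL'₁, ← Multiset.singleton_add, ← Multiset.singleton_add]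
      exact cutExpand_single_add ⟨hlt, hx⟩ N
    · rw [← Multiset.mem_coe, hL'₁, Multiset.mem_cons] at hy
      rcases hy with rfl | hy
      · exact hx.inv hlt
      · exact hL y (by simp [← Multiset.mem_coe, hL₁, hy])

theorem acc_lt (hg : ∀ g, Acc prec g) : ∀ t : Tree B, Acc (Lt prec) t
  | node g L => acc_node (hg g) fun x _ => acc_lt hg x

theorem wellFounded_lt (h : WellFounded prec) : WellFounded (Lt prec) :=
  ⟨acc_lt h.apply⟩

end Tree

theorem coe_flatMap_finRange {C : Type} {n : ℕ} (G : Fin n → List C) :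
    (((List.finRange n).flatMap G : List C) : Multiset C) = ∑ j, (G j : Multiset C) := by
  induction n with
  | zero => simp
  | succ n ih => simp [List.finRange_succ, Fin.sum_univ_succ, List.flatMap_map, ← ih]

theorem exists_coe_flatMap_finRange_update {C : Type} {n : ℕ} (G : Fin n → List C) (i : Fin n)
    (v : List C) : ∃ N : Multiset C,
      (((List.finRange n).flatMap G : List C) : Multiset C) = (G i : Multiset C) + N ∧
      (((List.finRange n).flatMap (Function.update G i v) : List C) : Multiset C) =
        (v : Multiset C) + N := by
  refine ⟨∑ j ∈ Finset.univ \ {i}, (G j : Multiset C), ?_, ?_⟩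
  · rw [coe_flatMap_finRange]
    exact Finset.sum_eq_add_sum_sdiff_singleton_of_mem (Finset.mem_univ i) _
  · rw [coe_flatMap_finRange, ← Finset.sum_update_of_mem (Finset.mem_univ i)]
    exact Finset.sum_congr rfl fun j _ =>
      Function.apply_update (fun _ (l : List C) => (l : Multiset C)) G i v j

theorem flatMap_finRange_update_subset {C : Type} {n : ℕ} {G : Fin n → List C} {i : Fin n}
    {v : List C} (hv : v ⊆ G i) :
    (List.finRange n).flatMap (Function.update G i v) ⊆ (List.finRange n).flatMap G := by
  intro y hy
  obtain ⟨j, -, hj⟩ := List.mem_flatMap.1 hy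
  refine List.mem_flatMap.2 ⟨j, List.mem_finRange j, ?_⟩
  rcases eq_or_ne j i with rfl | hji
  · exact hv (by simpa using hj)
  · simpa [hji] using hj

section Terms

variable {F : Type} {ar : F → ℕ}

theorem mem_vars_app {X : Type} {x : X} {f : F} {ts : Fin (ar f) → Tm F ar X} :
    x ∈ Vars (Tm.app f ts) ↔ ∃ i, x ∈ Vars (ts i) :=
  Set.mem_iUnion

theorem subst_subst {X Y Z : Type} (σ : X → Tm F ar Y) (θ : Y → Tm F ar Z) (t : Tm F ar X) :
    subst θ (subst σ t) = subst (fun x => subst θ (σ x)) t := by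
  induction t with
  | var x => rfl
  | app f ts ih => exact congrArg (Tm.app f) (funext ih)

theorem rw_subst {X V W : Type} {R : Set (Tm F ar X × Tm F ar X)} {t t' : Tm F ar V}
    (h : Rw R t t') (θ : V → Tm F ar W) : Rw R (subst θ t) (subst θ t') := by
  induction h with
  | rule hm σ => rw [subst_subst, subst_subst]; exact .rule hm _
  | @ctxt f ts i t' _ ih =>
    have := Rw.ctxt (f := f) (ts := fun j => subst θ (ts j)) i ih
    rwa [← funext (Function.apply_update (fun _ => subst θ) ts i t')] at this

variable {X A : Type} {I : Interp F ar A} {α : X → A}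

theorem Eval.unique {t : Tm F ar X} {a b : A} (ha : Eval I α t a) (hb : Eval I α t b) :
    a = b := by
  induction ha generalizing b with
  | var x => cases hb; rfl
  | app as _ hI ih =>
    cases hb with
    | app bs hbs hI' =>
      obtain rfl : as = bs := funext fun i => ih i (hbs i)
      exact Option.some.inj (hI.symm.trans hI')

theorem eval_subst {Y : Type} {β : Y → A} {σ : X → Tm F ar Y} {t : Tm F ar X} {a : A}
    (h : Eval I α t a) (hσ : ∀ x ∈ Vars t, Eval I β (σ x) (α x)) :
    Eval I β (subst σ t) a := by
  induction h with
  | var x => exact hσ x rfl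
  | app as _ hI ih =>
    exact .app as (fun i => ih i fun x hx => hσ x (mem_vars_app.2 ⟨i, hx⟩)) hI

theorem eval_of_eval_subst {Y : Type} {β : Y → A} {σ : X → Tm F ar Y} {t : Tm F ar X} {a : A}
    (h : Eval I β (subst σ t) a) (hσ : ∀ x ∈ Vars t, Eval I β (σ x) (α x)) :
    Eval I α t a := by
  induction t generalizing a with
  | var x => exact (h.unique (hσ x rfl)) ▸ .var x
  | app f ts ih =>
    cases h with
    | app as hts hI =>
      exact .app as (fun i => ih i (hts i) fun x hx => hσ x (mem_vars_app.2 ⟨i, hx⟩)) hI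

theorem exists_eval_of_eval_subst {Y : Type} {β : Y → A} {σ : X → Tm F ar Y} {t : Tm F ar X}
    {a : A} (h : Eval I β (subst σ t) a) : ∀ x ∈ Vars t, ∃ b, Eval I β (σ x) b := by
  induction t generalizing a with
  | var x => rintro y rfl; exact ⟨a, h⟩
  | app f ts ih =>
    cases h with
    | app as hts _ =>
      intro x hx
      obtain ⟨i, hi⟩ := mem_vars_app.1 hx
      exact ih i (hts i) x hi

theorem exists_assignment_of_eval_subst {Y : Type} {β : Y → A} {σ : X → Tm F ar Y}
    {t : Tm F ar X} {a : A} (h : Eval I β (subst σ t) a) :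
    ∃ α : X → A, (∀ x ∈ Vars t, Eval I β (σ x) (α x)) ∧ Eval I α t a := by
  have : Nonempty A := ⟨a⟩
  choose! α hα using exists_eval_of_eval_subst h
  exact ⟨α, hα, eval_of_eval_subst h hα⟩

theorem Eval.exists_lab {t : Tm F ar X} {a : A} (h : Eval I α t a) : ∃ q, Lab I α t q := by
  induction h with
  | var x => exact ⟨.var x, .var x⟩
  | app as hts hI ih =>
    choose qs hqs using ih
    exact ⟨_, .app as (by rw [hI]; rfl) qs hts hqs⟩

theorem Lab.unique {t : Tm F ar X} {q q' : Tm (FlabT I) (arLab I) X}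
    (h : Lab I α t q) (h' : Lab I α t q') : q = q' := by
  induction h generalizing q' with
  | var x => cases h'; rfl
  | app as _ qs hev _ ih =>
    cases h' with
    | app as' _ qs' hev' hlab' =>
      obtain rfl : as = as' := funext fun i => (hev i).unique (hev' i)
      obtain rfl : qs = qs' := funext fun i => ih i (hlab' i)
      rfl

theorem lab_subst {Y : Type} {β : Y → A} {σ : X → Tm F ar Y}
    {σ' : X → Tm (FlabT I) (arLab I) Y} {t : Tm F ar X} {q : Tm (FlabT I) (arLab I) X}
    (h : Lab I α t q) (hσ : ∀ x ∈ Vars t, Eval I β (σ x) (α x))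
    (hσ' : ∀ x ∈ Vars t, Lab I β (σ x) (σ' x)) : Lab I β (subst σ t) (subst σ' q) := by
  induction h with
  | var x => exact hσ' x rfl
  | @app f ts as hI _ hev _ ih =>
    have hmem {i x} (hx : x ∈ Vars (ts i)) : x ∈ Vars (Tm.app f ts) :=
      mem_vars_app.2 ⟨i, hx⟩
    exact .app as hI _ (fun i => eval_subst (hev i) fun x hx => hσ x (hmem hx))
      (fun i => ih i (fun x hx => hσ x (hmem hx)) (fun x hx => hσ' x (hmem hx)))

end Terms

section Model

variable {F : Type} {ar : F → ℕ} {X A : Type} {I : Interp F ar A}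
  {R : Set (Tm F ar X × Tm F ar X)}

def definedTerms (I : Interp F ar A) : Set (Tm F ar Empty) := {t | ∃ a, Eval I Empty.elim t a}

theorem exists_assignment_of_rule (hmodel : PartialModel I (fun a b => a = b) R)
    {l r : Tm F ar X} (hm : (l, r) ∈ R) {V : Type} {β : V → A} {σ : X → Tm F ar V} {a : A}
    (h : Eval I β (subst σ l) a) :
    ∃ α : X → A,
      (∀ x ∈ Vars l, Eval I β (σ x) (α x)) ∧ Eval I α l a ∧ Eval I α r a := by
  obtain ⟨α, hα, hl⟩ := exists_assignment_of_eval_subst h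
  obtain ⟨b, hr, rfl⟩ := hmodel _ hm α a hl
  exact ⟨α, hα, hl, hr⟩

theorem eval_of_rw (hR : IsTRS R) (hmodel : PartialModel I (fun a b => a = b) R)
    {V : Type} {β : V → A} {t t' : Tm F ar V} (h : Rw R t t') {a : A}
    (ht : Eval I β t a) : Eval I β t' a := by
  induction h generalizing a with
  | rule hm σ =>
    obtain ⟨α, hα, -, hr⟩ := exists_assignment_of_rule hmodel hm ht
    exact eval_subst hr fun x hx => hα x ((hR _ hm).2 hx)
  | ctxt i _ ih =>
    cases ht with
    | app as hts hI =>
      refine .app as (fun j => ?_) hI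
      rcases eq_or_ne j i with rfl | hj
      · simpa using ih (hts j)
      · simpa [hj] using hts j

theorem labTRS_rw_of_rw (hR : IsTRS R) (hmodel : PartialModel I (fun a b => a = b) R)
    {V : Type} {β : V → A} {t t' : Tm F ar V} (h : Rw R t t') {a : A} (ht : Eval I β t a)
    {q q' : Tm (FlabT I) (arLab I) V} (hq : Lab I β t q) (hq' : Lab I β t' q') :
    Rw (labTRS I R) q q' := by
  induction h generalizing a q q' with
  | @rule l r hm σ =>
    obtain ⟨α, hα, hl, hr⟩ := exists_assignment_of_rule hmodel hm ht
    obtain ⟨ql, hql⟩ := hl.exists_lab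
    obtain ⟨qr, hqr⟩ := hr.exists_lab
    have : Nonempty (Tm (FlabT I) (arLab I) V) := ⟨q⟩
    choose! σ' hσ' using fun x hx => (hα x hx).exists_lab
    have hrl : Vars r ⊆ Vars l := (hR _ hm).2
    obtain rfl := hq.unique (lab_subst hql hα hσ')
    obtain rfl := hq'.unique
      (lab_subst hqr (fun x hx => hα x (hrl hx)) fun x hx => hσ' x (hrl hx))
    exact .rule (show (ql, qr) ∈ labTRS I R from ⟨(l, r), hm, α, ⟨a, hl⟩, hql, hqr⟩) σ'
  | @ctxt f ts i u hst ih =>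
    obtain _ | ⟨as, hts, hI⟩ := ht
    obtain _ | ⟨as', hsome, qs, hev, hlab⟩ := hq
    obtain rfl : as' = as := funext fun j => (hev j).unique (hts j)
    have hu := eval_of_rw hR hmodel hst (hts i)
    obtain ⟨qu, hqu⟩ := hu.exists_lab
    have hev' : ∀ j, Eval I β (Function.update ts i u j) (as' j) := by
      intro j
      rcases eq_or_ne j i with rfl | hj
      · simpa using hu
      · simpa [hj] using hts j
    have hlab' : ∀ j, Lab I β (Function.update ts i u j) (Function.update qs i qu j) := by
      intro j
      rcases eq_or_ne j i with rfl | hj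
      · simpa using hqu
      · simpa [hj] using hlab j
    obtain rfl := hq'.unique (.app as' hsome _ hev' hlab')
    exact Rw.ctxt (f := ⟨⟨f, as'⟩, hsome⟩) (ts := qs) i (ih (hts i) (hlab i) hqu)

theorem snOn_of_sn_labTRS (hR : IsTRS R)
    (hmodel : PartialModel I (fun a b => a = b) R)
    (h : SNon (Rw (labTRS I R)) (Set.univ : Set (Tm (FlabT I) (arLab I) X))) :
    SNon (Rw R) (definedTerms I) := by
  rintro t ⟨a, ht⟩ ⟨f, rfl, hf⟩
  have hev (n : ℕ) : Eval I Empty.elim (f n) a := by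
    induction n with
    | zero => exact ht
    | succ n ih => exact eval_of_rw hR hmodel (hf n) ih
  choose q hq using fun n => (hev n).exists_lab
  refine h (subst Empty.elim (q 0)) trivial ⟨fun n => subst Empty.elim (q n), rfl, fun n => ?_⟩
  exact rw_subst (labTRS_rw_of_rw hR hmodel (hf n) (hev n) (hq n) (hq (n + 1))) _

theorem InCore.exists_ground {a : A} (h : InCore I a) :
    ∃ t : Tm F ar Empty, Eval I Empty.elim t a := by
  induction h with
  | mk as _ hI ih =>
    choose ts hts using ih
    exact ⟨.app _ ts, .app as hts hI⟩

end Model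

section Repair

variable {F : Type} {ar : F → ℕ} {X A : Type} [Nonempty A] {I : Interp F ar A}

/-- The value announced by the root label; junk on variables. -/
noncomputable def rootVal : Tm (FlabT I) (arLab I) X → A
  | .var _ => Classical.arbitrary A
  | .app p _ => (I p.1.1 p.1.2).get p.2

theorem rootVal_subst_of_lab {α : X → A} {f : F} {us : Fin (ar f) → Tm F ar X}
    {q : Tm (FlabT I) (arLab I) X} {b : A} (hq : Lab I α (.app f us) q)
    (hb : Eval I α (.app f us) b) {V : Type} (σ : X → Tm (FlabT I) (arLab I) V) :
    rootVal (subst σ q) = b := by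
  obtain _ | ⟨as, hsome, qs, hev, -⟩ := hq
  obtain _ | ⟨cs, hcs, hI⟩ := hb
  obtain rfl : as = cs := funext fun i => (hev i).unique (hcs i)
  exact Option.get_of_eq_some hsome hI

variable [DecidableEq A] (rep : A → Tm F ar Empty)

noncomputable def repair : Tm (FlabT I) (arLab I) X → Tm F ar Empty
  | .var _ => rep (Classical.arbitrary A)
  | .app p ss => .app p.1.1 fun i =>
      if rootVal (ss i) = p.1.2 i then repair (ss i) else rep (p.1.2 i)

-- `repairAt a s`, `fringeAt a s` and `treeAt a s` are what `s` contributes to `repair`, `fringe`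
-- and `treeOf` of a term in which it stands at an argument position labelled `a`.
noncomputable def repairAt (a : A) (s : Tm (FlabT I) (arLab I) X) : Tm F ar Empty :=
  if rootVal s = a then repair rep s else rep a

noncomputable def fringe : Tm (FlabT I) (arLab I) X → List (Tree (Tm F ar Empty))
  | .var _ => []
  | .app p ss => (List.finRange _).flatMap fun i =>
      if rootVal (ss i) = p.1.2 i then fringe (ss i)
      else [.node (repair rep (ss i)) (fringe (ss i))]

noncomputable def treeOf (s : Tm (FlabT I) (arLab I) X) : Tree (Tm F ar Empty) :=
  .node (repair rep s) (fringe rep s)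

noncomputable def fringeAt (a : A) (s : Tm (FlabT I) (arLab I) X) : List (Tree (Tm F ar Empty)) :=
  if rootVal s = a then fringe rep s else [treeOf rep s]

noncomputable def treeAt (a : A) (s : Tm (FlabT I) (arLab I) X) : Tree (Tm F ar Empty) :=
  .node (repairAt rep a s) (fringeAt rep a s)

variable {rep}

theorem repair_app (p : FlabT I) (ss : Fin (arLab I p) → Tm (FlabT I) (arLab I) X) :
    repair rep (.app p ss) = .app p.1.1 fun i => repairAt rep (p.1.2 i) (ss i) := rfl

theorem fringe_app (p : FlabT I) (ss : Fin (arLab I p) → Tm (FlabT I) (arLab I) X) :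
    fringe rep (.app p ss) = (List.finRange _).flatMap fun i => fringeAt rep (p.1.2 i) (ss i) :=
  rfl

theorem treeAt_of_rootVal_eq {a : A} {s : Tm (FlabT I) (arLab I) X} (h : rootVal s = a) :
    treeAt rep a s = treeOf rep s := by
  simp [treeAt, repairAt, fringeAt, treeOf, h]

theorem treeAt_of_rootVal_ne {a : A} {s : Tm (FlabT I) (arLab I) X} (h : rootVal s ≠ a) :
    treeAt rep a s = .node (rep a) [treeOf rep s] := by
  simp [treeAt, repairAt, fringeAt, h]

variable (hrep : ∀ a, Eval I Empty.elim (rep a) a)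
include hrep

theorem eval_repair (s : Tm (FlabT I) (arLab I) X) :
    Eval I Empty.elim (repair rep s) (rootVal s) := by
  induction s with
  | var x => exact hrep _
  | app p ss ih =>
    refine .app p.1.2 (fun i => ?_) (Option.some_get p.2).symm
    by_cases h : rootVal (ss i) = p.1.2 i
    · simpa [h] using ih i
    · simpa [h] using hrep (p.1.2 i)

theorem eval_repairAt (a : A) (s : Tm (FlabT I) (arLab I) X) :
    Eval I Empty.elim (repairAt rep a s) a := by
  by_cases h : rootVal s = a
  · simpa [repairAt, h] using eval_repair hrep s
  · simpa [repairAt, h] using hrep a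

end Repair

section Decrease

variable {F : Type} {ar : F → ℕ} {X V A : Type} [Nonempty A] [DecidableEq A]
  {I : Interp F ar A} {R : Set (Tm F ar X × Tm F ar X)} {rep : A → Tm F ar Empty}

theorem treeAt_lt_treeAt {prec : Tm F ar Empty → Tm F ar Empty → Prop}
    {s t : Tm (FlabT I) (arLab I) V} (hv : rootVal t = rootVal s)
    (h : Tree.Lt prec (treeOf rep t) (treeOf rep s)) (a : A) :
    Tree.Lt prec (treeAt rep a t) (treeAt rep a s) := by
  by_cases hs : rootVal s = a
  · rwa [treeAt_of_rootVal_eq hs, treeAt_of_rootVal_eq (hv.trans hs)]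
  · rw [treeAt_of_rootVal_ne hs, treeAt_of_rootVal_ne (hv ▸ hs)]
    exact .child 0 h rfl rfl

theorem repairAt_subst_of_lab {α : X → A} {u : Tm F ar X} {q : Tm (FlabT I) (arLab I) X}
    (hq : Lab I α u q) {b : A} (hb : Eval I α u b) (σ : X → Tm (FlabT I) (arLab I) V) :
    repairAt rep b (subst σ q) = subst (fun x => repairAt rep (α x) (σ x)) u := by
  induction hq generalizing b with
  | var x => cases hb; rfl
  | @app f us as hsome qs hev hlab ih =>
    rw [repairAt, if_pos (rootVal_subst_of_lab (.app as hsome qs hev hlab) hb σ)]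
    exact congrArg (Tm.app f) (funext fun i => ih i (hev i))

theorem mem_fringeAt_subst_of_lab {α : X → A} {u : Tm F ar X} {q : Tm (FlabT I) (arLab I) X}
    (hq : Lab I α u q) {b : A} (hb : Eval I α u b) (σ : X → Tm (FlabT I) (arLab I) V)
    (y : Tree (Tm F ar Empty)) :
    y ∈ fringeAt rep b (subst σ q) ↔ ∃ x ∈ Vars u, y ∈ fringeAt rep (α x) (σ x) := by
  induction hq generalizing b with
  | var x =>
    cases hb
    simp only [Vars, Set.mem_singleton_iff, exists_eq_left]
    rfl
  | @app f us as hsome qs hev hlab ih =>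
    rw [fringeAt, if_pos (rootVal_subst_of_lab (.app as hsome qs hev hlab) hb σ)]
    change y ∈ (List.finRange (ar f)).flatMap (fun i => fringeAt rep (as i) (subst σ (qs i))) ↔
      _
    simp only [List.mem_flatMap, List.mem_finRange, true_and, ih _ (hev _), mem_vars_app]
    constructor
    · rintro ⟨i, x, hx, hy⟩
      exact ⟨x, ⟨i, hx⟩, hy⟩
    · rintro ⟨x, ⟨i, hx⟩, hy⟩
      exact ⟨i, x, hx, hy⟩

variable (hrep : ∀ a, Eval I Empty.elim (rep a) a)
include hrep

theorem treeOf_app_update_lt {p : FlabT I} {ss : Fin (arLab I p) → Tm (FlabT I) (arLab I) V}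
    {i : Fin (arLab I p)} {t : Tm (FlabT I) (arLab I) V}
    (h : Tree.Lt (revOn (Rw R) (definedTerms I)) (treeAt rep (p.1.2 i) t)
      (treeAt rep (p.1.2 i) (ss i))) :
    Tree.Lt (revOn (Rw R) (definedTerms I)) (treeOf rep (.app p (Function.update ss i t)))
      (treeOf rep (.app p ss)) := by
  have hrepair : repair rep (.app p (Function.update ss i t)) = .app p.1.1
      (Function.update (fun j => repairAt rep (p.1.2 j) (ss j)) i (repairAt rep (p.1.2 i) t)) :=
    congrArg (Tm.app p.1.1)
      (funext (Function.apply_update (fun j => repairAt rep (p.1.2 j)) ss i t))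
  have hfringe : fringe rep (.app p (Function.update ss i t)) = (List.finRange _).flatMap
      (Function.update (fun j => fringeAt rep (p.1.2 j) (ss j)) i (fringeAt rep (p.1.2 i) t)) :=
    congrArg (List.flatMap · _)
      (funext (Function.apply_update (fun j => fringeAt rep (p.1.2 j)) ss i t))
  rw [treeAt, treeAt] at h
  rcases Tree.lt_node_iff.1 h with ⟨⟨-, hrw⟩, hsub⟩ | ⟨heq, M, x', x, hlt, hL, hL'⟩
  · rw [treeOf, treeOf, hrepair, hfringe, repair_app, fringe_app]
    exact .root ⟨⟨_, eval_repair hrep (.app p ss)⟩,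
      .ctxt (f := p.1.1) (ts := fun j => repairAt rep (p.1.2 j) (ss j)) i hrw⟩
      (flatMap_finRange_update_subset hsub)
  · have hhead : repair rep (.app p (Function.update ss i t)) = repair rep (.app p ss) := by
      rw [hrepair, repair_app]
      exact congrArg (Tm.app p.1.1) (Function.update_eq_self_iff.2 heq)
    obtain ⟨N, hN, hN'⟩ := exists_coe_flatMap_finRange_update
      (fun j => fringeAt rep (p.1.2 j) (ss j)) i (fringeAt rep (p.1.2 i) t)
    rw [treeOf, treeOf, hhead, hfringe, fringe_app]
    refine .child (M + N) hlt ?_ ?_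
    · rw [hN, hL, Multiset.cons_add]
    · rw [hN', hL', Multiset.cons_add]

theorem treeOf_lt_of_rule (hR : IsTRS R) (hnc : ∀ p ∈ R, ∀ x : X, p.2 ≠ Tm.var x)
    (hmodel : PartialModel I (fun a b => a = b) R) {l r : Tm F ar X} (hm : (l, r) ∈ R)
    {α : X → A} {a : A} (hl : Eval I α l a) {ql qr : Tm (FlabT I) (arLab I) X}
    (hql : Lab I α l ql) (hqr : Lab I α r qr) (σ : X → Tm (FlabT I) (arLab I) V) :
    rootVal (subst σ qr) = rootVal (subst σ ql) ∧
      Tree.Lt (revOn (Rw R) (definedTerms I)) (treeOf rep (subst σ qr))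
        (treeOf rep (subst σ ql)) := by
  obtain ⟨_, hr, rfl⟩ := hmodel _ hm α a hl
  have rootVal_eq {u : Tm F ar X} {q} (hu : ∀ x, u ≠ .var x) (hq : Lab I α u q)
      (hu' : Eval I α u a) : rootVal (subst σ q) = a := by
    cases u with
    | var x => exact absurd rfl (hu x)
    | app f us => exact rootVal_subst_of_lab hq hu' σ
  have hvl := rootVal_eq (hR _ hm).1 hql hl
  have hvr := rootVal_eq (hnc _ hm) hqr hr
  refine ⟨hvr.trans hvl.symm, ?_⟩
  rw [← treeAt_of_rootVal_eq hvl, ← treeAt_of_rootVal_eq hvr, treeAt, treeAt]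
  refine .root ⟨⟨a, eval_repairAt hrep _ _⟩, ?_⟩ fun y hy => ?_
  · rw [repairAt_subst_of_lab hql hl, repairAt_subst_of_lab hqr hr]
    exact .rule hm _
  · obtain ⟨x, hx, hy⟩ := (mem_fringeAt_subst_of_lab hqr hr σ y).1 hy
    exact (mem_fringeAt_subst_of_lab hql hl σ y).2 ⟨x, (hR _ hm).2 hx, hy⟩

theorem treeOf_lt_of_rw (hR : IsTRS R) (hnc : ∀ p ∈ R, ∀ x : X, p.2 ≠ Tm.var x)
    (hmodel : PartialModel I (fun a b => a = b) R) {s t : Tm (FlabT I) (arLab I) V}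
    (h : Rw (labTRS I R) s t) :
    rootVal t = rootVal s ∧
      Tree.Lt (revOn (Rw R) (definedTerms I)) (treeOf rep t) (treeOf rep s) := by
  induction h with
  | rule hq σ =>
    obtain ⟨⟨l, r⟩, hm, α, ⟨a, hl⟩, hql, hqr⟩ := hq
    exact treeOf_lt_of_rule hrep hR hnc hmodel hm hl hql hqr σ
  | ctxt i _ ih => exact ⟨rfl, treeOf_app_update_lt hrep (treeAt_lt_treeAt ih.1 ih.2 _)⟩

theorem wellFounded_labTRS (hR : IsTRS R) (hnc : ∀ p ∈ R, ∀ x : X, p.2 ≠ Tm.var x)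
    (hmodel : PartialModel I (fun a b => a = b) R)
    (hwf : WellFounded (revOn (Rw R) (definedTerms I))) :
    WellFounded (flip (Rw (V := V) (labTRS I R))) :=
  Subrelation.wf (fun h => (treeOf_lt_of_rw hrep hR hnc hmodel h).2)
    (InvImage.wf (treeOf rep) (Tree.wellFounded_lt hwf))

end Decrease

/-- Let `R` be a non-collapsing TRS and `(A, I)` a core
partial model for `R`.  Then `R` is terminating on
`L(A) = {t ground | [[t]] defined}` iff the labelled TRS `lab_A(R)` is
terminating on all terms over the labelled signature. -/
theorem local_termination_iff_labelled_global_termination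
    {F X A : Type} {ar : F → ℕ} [Nonempty A]
    (R : Set (Tm F ar X × Tm F ar X)) (hR : IsTRS R)
    (hnc : ∀ p ∈ R, ∀ x : X, p.2 ≠ Tm.var x)
    (I : Interp F ar A)
    (hmodel : PartialModel I (fun a b => a = b) R)
    (hcore : ∀ a : A, InCore I a) :
    SNon (Rw R) {t : Tm F ar Empty | ∃ a : A, Eval I Empty.elim t a} ↔
      SNon (Rw (labTRS I R))
        (Set.univ : Set (Tm (FlabT I) (arLab I) X)) := by
  refine ⟨fun hSN => ?_, snOn_of_sn_labTRS hR hmodel⟩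
  classical
  choose rep hrep using fun a => (hcore a).exists_ground
  exact SNon.of_wellFounded (wellFounded_labTRS hrep hR hnc hmodel hSN.wellFounded) _

end LocalTerm
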